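/- arXiv:1803.05064 — 2 statements merged into one kernel-verified Lean document; each statement's English description precedes it below -/
import Mathlib

section
/- If G is a finitely generated hyper-FC central group, then the upper FC-series of G stabilizes at some finite ordinal, i.e., there exists n ∈ ℕ with F_n = G. -/
universe u

/-- The conjugacy class of `g` in `G`. -/
def conjClassSet {G : Type u} [Group G] (g : G) : Set G := {h | ∃ x : G, x * g * x⁻¹ = h}

/-- An FC-element is one with a finite conjugacy class. -/
def IsFCElement {G : Type u} [Group G] (g : G) : Prop := (conjClassSet g).Finite

/-- A group is ICC if every nonidentity element has an infinite conjugacy class. -/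
def IsICC (G : Type u) [Group G] : Prop := ∀ g : G, g ≠ 1 → (conjClassSet g).Infinite

/-- The FC-center of a group: the subgroup of elements with finite conjugacy class. -/
def FCCenter (G : Type u) [Group G] : Subgroup G where
  carrier := {g | IsFCElement g}
  one_mem' := Set.Finite.subset (Set.finite_singleton 1) (by rintro h ⟨x, rfl⟩; simp)
  mul_mem' := by
    intro a b ha hb
    refine ((Set.Finite.image (fun p : G × G => p.1 * p.2) (ha.prod hb)).subset ?_)
    rintro h ⟨x, rfl⟩
    exact ⟨(x * a * x⁻¹, x * b * x⁻¹), ⟨⟨x, rfl⟩, ⟨x, rfl⟩⟩, by group⟩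
  inv_mem' := by
    intro a ha
    refine (ha.image Inv.inv).subset ?_
    rintro h ⟨x, rfl⟩
    exact ⟨x * a * x⁻¹, ⟨x, rfl⟩, by group⟩

instance FCCenter_normal (G : Type u) [Group G] : (FCCenter G).Normal := by
  constructor
  intro n hn g
  refine Set.Finite.subset hn ?_
  rintro h ⟨x, rfl⟩
  exact ⟨x * g, by group⟩

/-- One step of the upper FC-series: the preimage of the FC-center of the quotient. -/
noncomputable def fcStep {G : Type u} [Group G] (F : Subgroup G) : Subgroup G :=
  (FCCenter (G ⧸ Subgroup.normalClosure (F : Set G))).comap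
    (QuotientGroup.mk' (Subgroup.normalClosure (F : Set G)))

instance fcStep_normal {G : Type u} [Group G] (F : Subgroup G) : (fcStep F).Normal :=
  Subgroup.Normal.comap inferInstance _

/-- The (transfinite) upper FC-series of `G`. -/
noncomputable def FCSeries (G : Type u) [Group G] (o : Ordinal.{u}) : Subgroup G :=
  Ordinal.limitRecOn o ⊥ (fun _ F => fcStep F)
    (fun o _ ih => ⨆ a : {a : Ordinal.{u} // a < o}, ih a a.2)

lemma FCSeries_zero (G : Type u) [Group G] : FCSeries G 0 = ⊥ :=
  Ordinal.limitRecOn_zero ..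

lemma FCSeries_succ (G : Type u) [Group G] (o : Ordinal.{u}) :
    FCSeries G (o + 1) = fcStep (FCSeries G o) :=
  Ordinal.limitRecOn_succ ..

lemma FCSeries_limit (G : Type u) [Group G] (o : Ordinal.{u}) (h : Order.IsSuccLimit o) :
    FCSeries G o = ⨆ a : {a : Ordinal.{u} // a < o}, FCSeries G a :=
  Ordinal.limitRecOn_limit _ _ _ _ h

lemma normal_iSup {G : Type u} [Group G] {ι : Sort*} (f : ι → Subgroup G)
    (h : ∀ i, (f i).Normal) : (⨆ i, f i).Normal := by
  constructor
  intro n hn g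
  have key : Subgroup.map (MulAut.conj g).toMonoidHom (⨆ i, f i) = ⨆ i, f i := by
    rw [Subgroup.map_iSup]
    refine iSup_congr fun i => ?_
    ext x
    constructor
    · rintro ⟨y, hy, rfl⟩
      exact (h i).conj_mem y hy g
    · intro hx
      exact ⟨g⁻¹ * x * g, by simpa using (h i).conj_mem x hx g⁻¹, by simp [MulAut.conj]; group⟩
  rw [← key]
  exact ⟨n, hn, rfl⟩

instance FCSeries_normal (G : Type u) [Group G] (o : Ordinal.{u}) : (FCSeries G o).Normal := by
  induction o using Ordinal.limitRecOn with
  | zero => rw [FCSeries_zero]; infer_instance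
  | add_one o ih => rw [FCSeries_succ]; infer_instance
  | limit o ho ih => rw [FCSeries_limit G o ho]; exact normal_iSup _ fun a => ih a a.2

/-- The hyper-FC center of `G`: the stabilized term of the upper FC-series. -/
noncomputable def hyperFCCenter (G : Type u) [Group G] : Subgroup G :=
  ⨆ o : Ordinal.{u}, FCSeries G o

instance hyperFCCenter_normal (G : Type u) [Group G] : (hyperFCCenter G).Normal :=
  normal_iSup _ fun _ => inferInstance

/-- The finitely-indexed upper FC-series. -/
noncomputable def natFCSeries (G : Type u) [Group G] : ℕ → Subgroup G
  | 0 => ⊥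
  | n + 1 => fcStep (natFCSeries G n)

/-
If `G/N` is an FC-group and `G` is finitely generated, the generators `x` of `G` have
finite-index centralizers modulo `N`. Their intersection `W` is finitely generated (Schreier), and
the finitely many commutators `⁅w, x⁆` with `w` a generator of `W` lie in `N` and already make
every `x` an FC-element modulo their normal closure. Iterating this, `F_(o + m) = G` yields a
finite `T ⊆ F_o` with `F_m (G ⧸ ⟪T⟫) = G`. When `o` is a limit ordinal, `T` lies in some `F_a`
with `a < o`, hence `F_(a + m) = G`, and transfinite induction on `o` brings the length below `ω`.
-/

open Subgroup QuotientGroup Function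
open scoped commutatorElement

section FCElement

variable {G H K : Type*} [Group G] [Group H] [Group K]

lemma orbit_conjAct_eq_conjClassSet (x : G) :
    MulAction.orbit (ConjAct G) x = conjClassSet x := by
  ext y
  rw [ConjAct.mem_orbit_conjAct, isConj_comm, isConj_iff]
  rfl

lemma index_centralizer_eq_ncard_conjClassSet (x : G) :
    (centralizer {x}).index = (conjClassSet x).ncard := by
  calc (centralizer {x}).index = (MulAction.stabilizer (ConjAct G) x).index := by
        rw [ConjAct.stabilizer_eq_centralizer]; rfl
    _ = (conjClassSet x).ncard := by
        rw [MulAction.index_stabilizer, orbit_conjAct_eq_conjClassSet]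

lemma isFCElement_iff_finiteIndex_centralizer {x : G} :
    IsFCElement x ↔ (centralizer {x}).FiniteIndex := by
  have hx : x ∈ conjClassSet x := ⟨1, by group⟩
  rw [finiteIndex_iff, index_centralizer_eq_ncard_conjClassSet]
  exact ⟨fun h => Set.ncard_ne_zero_of_mem hx h, Set.finite_of_ncard_ne_zero⟩

lemma mem_comap_centralizer_iff {φ : G →* H} {g x : G} :
    g ∈ (centralizer {φ x}).comap φ ↔ ⁅g, x⁆ ∈ φ.ker := by
  rw [mem_comap, mem_centralizer_singleton_iff, MonoidHom.mem_ker, map_commutatorElement,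
    commutatorElement_eq_one_iff_commute, Commute, SemiconjBy, eq_comm]

lemma isFCElement_map_iff {φ : G →* H} (hφ : Surjective φ) {x : G} :
    IsFCElement (φ x) ↔ ((centralizer {φ x}).comap φ).FiniteIndex := by
  rw [isFCElement_iff_finiteIndex_centralizer, finiteIndex_iff, finiteIndex_iff,
    index_comap_of_surjective _ hφ]

lemma IsFCElement.of_ker_le {φ : G →* H} {ψ : G →* K} (hφ : Surjective φ) (hψ : Surjective ψ)
    (hker : φ.ker ≤ ψ.ker) {x : G} (hx : IsFCElement (φ x)) : IsFCElement (ψ x) := by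
  have := (isFCElement_map_iff hφ).1 hx
  refine (isFCElement_map_iff hψ).2
    (finiteIndex_of_le (H := (centralizer {φ x}).comap φ) fun g hg => ?_)
  rw [mem_comap_centralizer_iff] at hg ⊢
  exact hker hg

lemma exists_finset_isFCElement_mk_normalClosure [Group.FG G] (N : Subgroup G) [N.Normal]
    (X : Finset G) (hX : ∀ x ∈ X, IsFCElement (mk' N x)) :
    ∃ T : Finset G, (T : Set G) ⊆ N ∧
      ∀ x ∈ X, IsFCElement (mk' (normalClosure (T : Set G)) x) := by
  classical
  set W := ⨅ x ∈ X, (centralizer {mk' N x}).comap (mk' N)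
  have : W.FiniteIndex := finiteIndex_iInf' _ fun x hx =>
    (isFCElement_map_iff (mk'_surjective N)).1 (hX x hx)
  obtain ⟨S, hS⟩ := (Group.fg_iff_subgroup_fg W).1 inferInstance
  refine ⟨Finset.image₂ (fun w x => ⁅w, x⁆) S X, ?_, fun x hx => ?_⟩
  · intro t ht
    obtain ⟨w, hw, x, hx, rfl⟩ := Finset.mem_image₂.1 ht
    have hwW : w ∈ W := hS ▸ subset_closure hw
    rw [SetLike.mem_coe, ← ker_mk' N, ← mem_comap_centralizer_iff]
    exact mem_iInf.1 (mem_iInf.1 hwW x) hx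
  · rw [isFCElement_map_iff (mk'_surjective _)]
    refine finiteIndex_of_le (H := W) ?_
    rw [← hS, closure_le]
    intro w hw
    rw [SetLike.mem_coe, mem_comap_centralizer_iff, ker_mk']
    exact subset_normalClosure (Finset.mem_image₂_of_mem hw hx)

end FCElement

section FCSeries

variable {G H : Type u} [Group G] [Group H]

lemma mem_fcStep_iff {F : Subgroup G} [F.Normal] {x : G} :
    x ∈ fcStep F ↔ IsFCElement (mk' F x) := by
  have hker : (mk' (normalClosure (F : Set G))).ker = (mk' F).ker := by
    rw [ker_mk', ker_mk', normalClosure_eq_self]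
  exact ⟨.of_ker_le (mk'_surjective _) (mk'_surjective _) hker.le,
    .of_ker_le (mk'_surjective _) (mk'_surjective _) hker.ge⟩

lemma le_fcStep (F : Subgroup G) : F ≤ fcStep F := fun x hx => by
  have h1 : mk' (normalClosure (F : Set G)) x = 1 := by
    rw [← MonoidHom.mem_ker, ker_mk']
    exact subset_normalClosure hx
  change IsFCElement (mk' _ x)
  rw [h1]
  exact (FCCenter _).one_mem

lemma mem_FCSeries_one_iff {x : G} : x ∈ FCSeries G 1 ↔ IsFCElement x := by
  have hker : (mk' (⊥ : Subgroup G)).ker = (MonoidHom.id G).ker := by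
    rw [ker_mk', MonoidHom.ker_id]
  rw [← zero_add 1, FCSeries_succ, FCSeries_zero, mem_fcStep_iff]
  exact ⟨.of_ker_le (ψ := MonoidHom.id G) (mk'_surjective _) surjective_id hker.le,
    .of_ker_le (φ := MonoidHom.id G) surjective_id (mk'_surjective _) hker.ge⟩

lemma FCSeries_mono : Monotone (FCSeries G) := by
  intro a b hab
  induction b using Ordinal.limitRecOn with
  | zero => rw [nonpos_iff_eq_zero.1 hab]
  | add_one b ih =>
    rcases hab.lt_or_eq with hlt | rfl
    · rw [FCSeries_succ]
      exact (ih (Order.lt_add_one_iff.1 hlt)).trans (le_fcStep _)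
    · rfl
  | limit b hb ih =>
    rcases hab.lt_or_eq with hlt | rfl
    · rw [FCSeries_limit G b hb]
      exact le_iSup_of_le (⟨a, hlt⟩ : {a // a < b}) le_rfl
    · rfl

lemma exists_lt_finset_subset_FCSeries {o : Ordinal.{u}} (ho : Order.IsSuccLimit o)
    {T : Finset G} (hT : (T : Set G) ⊆ FCSeries G o) :
    ∃ a < o, (T : Set G) ⊆ FCSeries G a := by
  have : Nonempty {a // a < o} := ⟨⟨0, ho.bot_lt⟩⟩
  have hdir : Monotone fun a : {a // a < o} => (FCSeries G a : Set G) :=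
    fun a b hab => FCSeries_mono hab
  rw [FCSeries_limit G o ho, coe_iSup_of_directed hdir.directed_le] at hT
  obtain ⟨⟨a, ha⟩, hTa⟩ := hdir.directed_le.exists_mem_subset_of_finset_subset_biUnion hT
  exact ⟨a, ha, hTa⟩

lemma comap_mk'_FCSeries_le_comap_add {φ : G →* H} (hφ : Surjective φ)
    {N : Subgroup G} [N.Normal] {μ : Ordinal.{u}} (hN : N ≤ (FCSeries H μ).comap φ) (m : ℕ) :
    (FCSeries (G ⧸ N) m).comap (mk' N) ≤ (FCSeries H (μ + m)).comap φ := by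
  induction m with
  | zero => rwa [Nat.cast_zero, add_zero, FCSeries_zero, MonoidHom.comap_bot, ker_mk']
  | succ m ih =>
    intro x hx
    rw [Nat.cast_succ, FCSeries_succ] at hx
    rw [Nat.cast_succ, ← add_assoc, FCSeries_succ]
    rw [mem_comap, mem_fcStep_iff] at hx ⊢
    refine .of_ker_le (φ := (mk' _).comp (mk' N)) (ψ := (mk' _).comp φ)
      ((mk'_surjective _).comp (mk'_surjective N)) ((mk'_surjective _).comp hφ) ?_ hx
    rwa [← MonoidHom.comap_ker, ← MonoidHom.comap_ker, ker_mk', ker_mk']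

lemma FCSeries_add_eq_top_of_quotient {φ : G →* H} (hφ : Surjective φ)
    {N : Subgroup G} [N.Normal] {μ : Ordinal.{u}} (hN : N ≤ (FCSeries H μ).comap φ) {m : ℕ}
    (h : FCSeries (G ⧸ N) m = ⊤) : FCSeries H (μ + m) = ⊤ := by
  refine eq_top_iff.2 fun y _ => ?_
  obtain ⟨x, rfl⟩ := hφ y
  exact comap_mk'_FCSeries_le_comap_add hφ hN m (by rw [h]; trivial)

end FCSeries

lemma add_one_add_natCast (o : Ordinal.{u}) (m : ℕ) :
    o + 1 + (m : Ordinal.{u}) = o + ((m + 1 : ℕ) : Ordinal.{u}) := by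
  rw [add_assoc, ← Nat.cast_add_one_comm, Nat.cast_succ]

section FinitelyGenerated

variable {G : Type u} [Group G] [Group.FG G]

lemma exists_finset_FCSeries_quotient_eq_top (m : ℕ) {o : Ordinal.{u}}
    (h : FCSeries G (o + m) = ⊤) :
    ∃ T : Finset G, (T : Set G) ⊆ FCSeries G o ∧
      FCSeries (G ⧸ normalClosure (T : Set G)) m = ⊤ := by
  induction m generalizing o with
  | zero =>
    rw [Nat.cast_zero, add_zero] at h
    obtain ⟨S, hS⟩ := Group.FG.out (G := G)
    refine ⟨S, fun g _ => h ▸ mem_top g, eq_top_iff.2 fun q _ => ?_⟩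
    induction q using QuotientGroup.induction_on with | H g => ?_
    rw [Nat.cast_zero, FCSeries_zero, mem_bot, eq_one_iff]
    exact closure_le_normalClosure (hS ▸ mem_top g)
  | succ m ih =>
    rw [← add_one_add_natCast] at h
    obtain ⟨T', hT'o, hT'⟩ := ih h
    have hT'fc : ∀ t ∈ T', IsFCElement (mk' (FCSeries G o) t) := fun t ht => by
      rw [← mem_fcStep_iff, ← FCSeries_succ]
      exact hT'o ht
    obtain ⟨T, hTo, hTfc⟩ := exists_finset_isFCElement_mk_normalClosure _ T' hT'fc
    refine ⟨T, hTo, ?_⟩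
    have hT'one : normalClosure (T' : Set G) ≤ (FCSeries _ 1).comap (mk' _) :=
      normalClosure_le_normal fun t ht => mem_FCSeries_one_iff.2 (hTfc t ht)
    have := FCSeries_add_eq_top_of_quotient (mk'_surjective _) hT'one hT'
    rwa [← Nat.cast_add_one_comm, ← Nat.cast_succ] at this

lemma exists_natCast_FCSeries_eq_top_of_add_natCast (o : Ordinal.{u}) (m : ℕ)
    (h : FCSeries G (o + m) = ⊤) : ∃ n : ℕ, FCSeries G n = ⊤ := by
  induction o using Ordinal.limitRecOn generalizing m with
  | zero => exact ⟨m, by rwa [zero_add] at h⟩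
  | add_one o ih => exact ih (m + 1) (by rwa [← add_one_add_natCast])
  | limit o ho ih =>
    obtain ⟨T, hTo, hT⟩ := exists_finset_FCSeries_quotient_eq_top m h
    obtain ⟨a, hao, hTa⟩ := exists_lt_finset_subset_FCSeries ho hTo
    refine ih a hao m (FCSeries_add_eq_top_of_quotient (φ := MonoidHom.id G) surjective_id ?_ hT)
    exact normalClosure_le_normal hTa

end FinitelyGenerated

/-- For a finitely generated hyper-FC central group, the upper FC-series stabilizes at a
finite ordinal. -/
theorem fg_hyperFC_central_finite_rank (G : Type u) [Group G] (hfg : Group.FG G)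
    (h : ∃ γ : Ordinal.{u}, FCSeries G γ = ⊤) :
    ∃ n : ℕ, FCSeries G (n : Ordinal.{u}) = ⊤ := by
  obtain ⟨γ, hγ⟩ := h
  exact exists_natCast_FCSeries_eq_top_of_add_natCast γ 0 (by rwa [Nat.cast_zero, add_zero])
end

section
/- A finitely generated group G that is not virtually nilpotent admits a surjective homomorphism onto a nontrivial group J in which every nonidentity element has an infinite conjugacy class. -/
universe u

/-!
By Zorn's lemma there is a normal subgroup `N` of `G` maximal with `G ⧸ N` not virtually
nilpotent: virtual nilpotency of `G ⧸ N` only asks finitely many iterated commutators of the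
generators of a finite-index subgroup to lie in `N`, so it cannot first appear at the union of a
chain. If some `g ≠ 1` in `G ⧸ N` had finitely many conjugates, their centralizer `C` would have
finite index and would centralize the normal closure `W` of `g`. By maximality `(G ⧸ N) ⧸ W` is
virtually nilpotent, and intersecting the preimage of a nilpotent finite-index subgroup with `C`
gives a nilpotent finite-index subgroup of `G ⧸ N`, which is absurd.
-/

open Subgroup
open scoped commutatorElement

section CommutatorNormalClosure

variable {G : Type*} [Group G]

theorem commutator_normalClosure_top {S X : Set G} (hX : closure X = ⊤) :
    ⁅normalClosure S, ⊤⁆ = normalClosure (Set.image2 (⁅·, ·⁆) S X) := by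
  set M := normalClosure (Set.image2 (⁅·, ·⁆) S X)
  refine le_antisymm ?_ (normalClosure_le_normal ?_)
  · -- modulo `M`, each `s ∈ S` commutes with the generators `X`, hence is central
    have hS : S ⊆ (center (G ⧸ M)).comap (QuotientGroup.mk' M) := by
      have hXM : closure (QuotientGroup.mk' M '' X) = ⊤ := by
        rw [← MonoidHom.map_closure, hX, map_top_of_surjective _ (QuotientGroup.mk'_surjective M)]
      intro s hs
      rw [SetLike.mem_coe, mem_comap, ← centralizer_univ, ← coe_top, ← hXM, centralizer_closure]
      rintro _ ⟨x, hx, rfl⟩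
      have hsx : QuotientGroup.mk' M ⁅s, x⁆ = 1 :=
        (QuotientGroup.eq_one_iff _).mpr (subset_normalClosure ⟨s, hs, x, hx, rfl⟩)
      rw [map_commutatorElement, commutatorElement_eq_one_iff_mul_comm] at hsx
      exact hsx.symm
    have hSM := normalClosure_le_normal hS
    rw [← M.upperCentralSeriesStep_eq_comap_center] at hSM
    exact commutator_le.mpr fun a ha g _ ↦ hSM ha g
  · rintro _ ⟨s, hs, x, -, rfl⟩
    exact commutator_mem_commutator (subset_normalClosure hs) (mem_top x)

theorem exists_finite_normalClosure_eq_lowerCentralSeries [Group.FG G] (n : ℕ) :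
    ∃ T : Set G, T.Finite ∧ normalClosure T = (⊤ : Subgroup G).lowerCentralSeries n := by
  obtain ⟨X, hX, hXfin⟩ := Group.fg_iff.mp ‹Group.FG G›
  induction n with
  | zero => exact ⟨X, hXfin, top_unique (hX ▸ closure_le_normalClosure)⟩
  | succ n ih =>
    obtain ⟨T, hT, hTn⟩ := ih
    refine ⟨_, hT.image2 (⁅·, ·⁆) hXfin, ?_⟩
    rw [Subgroup.lowerCentralSeries_succ, ← hTn, commutator_normalClosure_top hX]

end CommutatorNormalClosure

theorem Subgroup.exists_mem_of_finite_subset_sSup {G : Type*} [Group G] {c : Set (Subgroup G)}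
    (hne : c.Nonempty) (hdir : DirectedOn (· ≤ ·) c) {T : Set G} (hT : T.Finite)
    (hTc : T ⊆ (sSup c : Subgroup G)) : ∃ N ∈ c, T ⊆ N := by
  have hunion : (hT.toFinset : Set G) ⊆ ⋃ N ∈ c, (N : Set G) := fun t ht ↦ by
    simpa using (mem_sSup_of_directedOn hne hdir).mp (hTc (hT.mem_toFinset.mp ht))
  simpa using hdir.exists_mem_subset_of_finset_subset_biUnion hne hunion

section Centralizer

variable {G : Type*} [Group G]

theorem finiteIndex_centralizer_singleton {g : G} (hg : (conjugatesOf g).Finite) :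
    (centralizer {g}).FiniteIndex := by
  have horbit : MulAction.orbit (ConjAct G) g = conjugatesOf g :=
    Set.ext fun _ ↦ ConjAct.mem_orbit_conjAct.trans isConj_comm
  have hstab : centralizer {g} = (MulAction.stabilizer (ConjAct G) g).comap
      (ConjAct.toConjAct : G ≃* ConjAct G).toMonoidHom := by
    ext x
    simp [mem_centralizer_singleton_iff, ConjAct.smul_def, mul_inv_eq_iff_eq_mul]
  have hindex := index_comap_of_surjective (MulAction.stabilizer (ConjAct G) g)
    (f := (ConjAct.toConjAct : G ≃* ConjAct G).toMonoidHom) ConjAct.toConjAct.surjective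
  rw [MulAction.index_stabilizer, horbit, ← hstab] at hindex
  exact ⟨hindex ▸ Set.ncard_ne_zero_of_mem mem_conjugatesOf_self hg⟩

theorem finiteIndex_centralizer_conjugatesOf {g : G} (hg : (conjugatesOf g).Finite) :
    (centralizer (conjugatesOf g)).FiniteIndex := by
  have := hg.to_subtype
  rw [centralizer_eq_iInf, iInf_subtype']
  refine finiteIndex_iInf fun s ↦ finiteIndex_centralizer_singleton ?_
  rwa [← (s.2 : IsConj g s).conjugatesOf_eq]

theorem normalClosure_singleton_le_centralizer_centralizer (g : G) :
    normalClosure {g} ≤ centralizer (centralizer (conjugatesOf g)) := by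
  have : Group.conjugatesOfSet {g} = conjugatesOf g := by simp [Group.conjugatesOfSet]
  rw [normalClosure, this]
  exact closure_le_centralizer_centralizer _

end Centralizer

section VirtuallyNilpotentModulo

variable {G : Type*} [Group G]

/-- For normal `N` this says that `G ⧸ N` is virtually nilpotent; it is stated inside `G` so
that it can be passed from the union of a chain down to one of its members. -/
def IsVirtuallyNilpotentModulo (N : Subgroup G) : Prop :=
  ∃ H : Subgroup G, H.FiniteIndex ∧ ∃ n, H.lowerCentralSeries n ≤ N

theorem isVirtuallyNilpotentModulo_bot_iff :
    IsVirtuallyNilpotentModulo (⊥ : Subgroup G) ↔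
      ∃ H : Subgroup G, H.FiniteIndex ∧ Group.IsNilpotent H := by
  simp only [IsVirtuallyNilpotentModulo, le_bot_iff, isNilpotent_iff_lowerCentralSeries]

theorem isVirtuallyNilpotentModulo_top : IsVirtuallyNilpotentModulo (⊤ : Subgroup G) :=
  ⟨⊤, inferInstance, 0, le_top⟩

namespace IsVirtuallyNilpotentModulo

variable {G' : Type*} [Group G'] {f : G →* G'}

theorem map (hf : Function.Surjective f) {N : Subgroup G} (hN : IsVirtuallyNilpotentModulo N) :
    IsVirtuallyNilpotentModulo (N.map f) := by
  obtain ⟨H, hH, n, hn⟩ := hN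
  refine ⟨H.map f, ⟨ne_zero_of_dvd_ne_zero hH.index_ne_zero (index_map_dvd H hf)⟩, n, ?_⟩
  rw [← map_lowerCentralSeries]
  exact map_mono hn

theorem comap (hf : Function.Surjective f) {N : Subgroup G'} (hN : IsVirtuallyNilpotentModulo N) :
    IsVirtuallyNilpotentModulo (N.comap f) := by
  obtain ⟨H, hH, n, hn⟩ := hN
  refine ⟨H.comap f, ⟨by rw [index_comap_of_surjective H hf]; exact hH.index_ne_zero⟩, n, ?_⟩
  rw [← map_le_iff_le_comap, map_lowerCentralSeries]
  exact (lowerCentralSeries_mono n (map_comap_le f H)).trans hn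

/-- Finite generation makes the lower central series of a finite-index subgroup normally
finitely generated, so it already lies in some member of a directed family. -/
theorem exists_mem_of_sSup [Group.FG G] {c : Set (Subgroup G)} (hc : ∀ N ∈ c, N.Normal)
    (hne : c.Nonempty) (hdir : DirectedOn (· ≤ ·) c)
    (h : IsVirtuallyNilpotentModulo (sSup c)) : ∃ N ∈ c, IsVirtuallyNilpotentModulo N := by
  obtain ⟨H, hH, n, hn⟩ := h
  obtain ⟨T, hT, hTn⟩ := exists_finite_normalClosure_eq_lowerCentralSeries (G := H) n
  have hTc : H.subtype '' T ⊆ (sSup c : Subgroup G) := by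
    rintro _ ⟨t, ht, rfl⟩
    rw [← top_subtype_lowerCentralSeries, ← hTn] at hn
    exact hn (mem_map_of_mem _ (subset_normalClosure ht))
  obtain ⟨N, hNc, hTN⟩ := exists_mem_of_finite_subset_sSup hne hdir (hT.image _) hTc
  have := hc N hNc
  refine ⟨N, hNc, H, hH, n, ?_⟩
  rw [← top_subtype_lowerCentralSeries, ← hTn, map_le_iff_le_comap]
  exact normalClosure_le_normal fun t ht ↦ hTN ⟨t, ht, rfl⟩

theorem bot_of_le_centralizer {W C : Subgroup G} [C.FiniteIndex] (hWC : W ≤ centralizer C)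
    (h : IsVirtuallyNilpotentModulo W) : IsVirtuallyNilpotentModulo (⊥ : Subgroup G) := by
  obtain ⟨H, hH, n, hn⟩ := h
  refine ⟨H ⊓ C, inferInstance, n + 1, ?_⟩
  rw [Subgroup.lowerCentralSeries_succ, le_bot_iff, commutator_eq_bot_iff_le_centralizer]
  calc (H ⊓ C).lowerCentralSeries n ≤ H.lowerCentralSeries n :=
        lowerCentralSeries_mono n inf_le_left
    _ ≤ W := hn
    _ ≤ centralizer C := hWC
    _ ≤ centralizer (H ⊓ C : Subgroup G) := centralizer_le inf_le_right

end IsVirtuallyNilpotentModulo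

end VirtuallyNilpotentModulo

theorem conjClassSet_eq_conjugatesOf {G : Type u} [Group G] (g : G) :
    conjClassSet g = conjugatesOf g := by
  ext h
  simp [conjClassSet, conjugatesOf, isConj_iff]

theorem isICC_quotient_of_forall_lt {G : Type u} [Group G] {N : Subgroup G} [N.Normal]
    (hN : ¬ IsVirtuallyNilpotentModulo N)
    (hmax : ∀ M : Subgroup G, M.Normal → N < M → IsVirtuallyNilpotentModulo M) :
    IsICC (G ⧸ N) := by
  intro g hg hfin
  rw [conjClassSet_eq_conjugatesOf] at hfin
  have hπ := QuotientGroup.mk'_surjective N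
  set W := normalClosure ({g} : Set (G ⧸ N))
  have hW : ⊥ < W := bot_lt_iff_ne_bot.mpr fun hW ↦
    hg (mem_bot.mp (hW ▸ subset_normalClosure (Set.mem_singleton g)))
  have hlt : N < W.comap (QuotientGroup.mk' N) := by
    simpa using (comap_lt_comap_of_surjective hπ).mpr hW
  have hWvn : IsVirtuallyNilpotentModulo W := by
    simpa [map_comap_eq_self_of_surjective hπ] using (hmax _ inferInstance hlt).map hπ
  have := finiteIndex_centralizer_conjugatesOf hfin
  have hbot := hWvn.bot_of_le_centralizer (normalClosure_singleton_le_centralizer_centralizer g)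
  exact hN (by simpa using hbot.comap hπ)

theorem exists_maximal_normal_not_isVirtuallyNilpotentModulo {G : Type*} [Group G]
    [Group.FG G] (h : ¬ IsVirtuallyNilpotentModulo (⊥ : Subgroup G)) :
    ∃ N : Subgroup G, Maximal (fun N ↦ N.Normal ∧ ¬ IsVirtuallyNilpotentModulo N) N := by
  set S := {N : Subgroup G | N.Normal ∧ ¬ IsVirtuallyNilpotentModulo N}
  have hub : ∀ c ⊆ S, IsChain (· ≤ ·) c → ∀ M ∈ c, ∃ ub ∈ S, ∀ K ∈ c, K ≤ ub := by
    intro c hc hchain M hM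
    refine ⟨sSup c, ⟨sSup_normal c fun K hK ↦ (hc hK).1, fun hsup ↦ ?_⟩, fun K hK ↦ le_sSup hK⟩
    obtain ⟨K, hKc, hK⟩ :=
      hsup.exists_mem_of_sSup (fun K hK ↦ (hc hK).1) ⟨M, hM⟩ hchain.directedOn
    exact (hc hKc).2 hK
  exact (zorn_le_nonempty₀ S hub ⊥ ⟨inferInstance, h⟩).imp fun _ hN ↦ hN.2

/-- A finitely generated group that is not virtually nilpotent surjects onto a nontrivial
ICC group. -/
theorem fg_not_virtually_nilpotent_has_icc_quotient (G : Type u) [Group G]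
    (hfg : Group.FG G) (h : ¬ ∃ N : Subgroup G, N.FiniteIndex ∧ Group.IsNilpotent N) :
    ∃ (J : Type u) (_ : Group J), Nontrivial J ∧
      ∃ τ : G →* J, Function.Surjective τ ∧ IsICC J := by
  obtain ⟨N, hN⟩ := exists_maximal_normal_not_isVirtuallyNilpotentModulo
    (isVirtuallyNilpotentModulo_bot_iff.not.mpr h)
  obtain ⟨hNnormal, hNvn⟩ := hN.prop
  refine ⟨G ⧸ N, inferInstance, QuotientGroup.nontrivial_iff.mpr ?_, QuotientGroup.mk' N,
    QuotientGroup.mk'_surjective N, isICC_quotient_of_forall_lt hNvn fun M hM hNM ↦ ?_⟩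
  · rintro rfl
    exact hNvn isVirtuallyNilpotentModulo_top
  · by_contra hMvn
    exact hNM.not_ge (hN.2 ⟨hM, hMvn⟩ hNM.le)
end
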